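/- Let (X,d) be a Q-metric space over a prime-continuous quantale Q. The topology generated by the balls B_T(x,δ) = {y | δ ⋘ d(x,y)} (using the totally-below relation) coincides with the topology generated by the balls B(x,δ) = {y | δ ≪ d(x,y)} (using the way-below relation), where in both cases δ ranges over elements with δ ⋘ 1 (respectively δ ≪ 1). -/

import Mathlib

def wayBelow {Q : Type*} [CompleteLattice Q] (x y : Q) : Prop :=
  ∀ D : Set Q, D.Nonempty → DirectedOn (· ≤ ·) D → y ≤ sSup D → ∃ d ∈ D, x ≤ d

def totallyBelow {Q : Type*} [CompleteLattice Q] (x y : Q) : Prop :=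
  ∀ D : Set Q, y ≤ sSup D → ∃ d ∈ D, x ≤ d

/-!
In any topology in which `{z | ε ≤ d y z}` is a neighbourhood of `y` whenever `ε ⋘ 1`, balls of
both kinds are open. Indeed, prime-continuity and distributivity give
`d x y = d x y ⊗ ⊔{ε | ε ⋘ 1} = ⊔{e | e ⋘ d x y ⊗ ε, ε ⋘ 1}`, and by the triangle inequality each
such `e` stays totally below `d x z` for all `z` near `y`; so `d x y` is a join of elements that
are eventually totally below `d x ·`, and `δ ⋘ d x y` or `δ ≪ d x y` is witnessed by one of them
(for `≪`, by one of their finite joins). Both generated topologies satisfy that condition, since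
their own balls around `y` are open and contain `y` because `1 ≤ d y y`.
-/

open Filter Topology

section CompleteLattice

variable {Q : Type*} [CompleteLattice Q] {a b c : Q}

theorem totallyBelow.le (h : totallyBelow a b) : a ≤ b := by
  obtain ⟨d, hd, hle⟩ := h {b} (by simp)
  exact (Set.mem_singleton_iff.mp hd) ▸ hle

theorem totallyBelow.wayBelow (h : totallyBelow a b) : wayBelow a b :=
  fun D _ _ hD => h D hD

theorem totallyBelow_of_le_of_totallyBelow (hab : a ≤ b) (h : totallyBelow b c) :
    totallyBelow a c :=
  fun D hD => let ⟨d, hd, hle⟩ := h D hD; ⟨d, hd, hab.trans hle⟩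

theorem totallyBelow_of_totallyBelow_of_le (h : totallyBelow a b) (hbc : b ≤ c) :
    totallyBelow a c :=
  fun D hD => h D (hbc.trans hD)

theorem wayBelow.le (h : wayBelow a b) : a ≤ b := by
  obtain ⟨d, hd, hle⟩ := h {b} (by simp) (directedOn_singleton b) (by simp)
  exact (Set.mem_singleton_iff.mp hd) ▸ hle

theorem wayBelow_of_le_of_wayBelow (hab : a ≤ b) (h : wayBelow b c) : wayBelow a c :=
  fun D hne hdir hD => let ⟨d, hd, hle⟩ := h D hne hdir hD; ⟨d, hd, hab.trans hle⟩

theorem wayBelow_bot : wayBelow (⊥ : Q) b :=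
  fun _ ⟨d, hd⟩ _ _ => ⟨d, hd, bot_le⟩

theorem wayBelow.sup (ha : wayBelow a c) (hb : wayBelow b c) : wayBelow (a ⊔ b) c := by
  intro D hne hdir hD
  obtain ⟨d₁, hd₁, h₁⟩ := ha D hne hdir hD
  obtain ⟨d₂, hd₂, h₂⟩ := hb D hne hdir hD
  obtain ⟨e, he, hd₁e, hd₂e⟩ := hdir d₁ hd₁ d₂ hd₂
  exact ⟨e, he, sup_le (h₁.trans hd₁e) (h₂.trans hd₂e)⟩

variable {X : Type*} [TopologicalSpace X] {f : X → Q}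

theorem isOpen_setOf_totallyBelow
    (hf : ∀ y, f y ≤ sSup {e | ∀ᶠ z in 𝓝 y, totallyBelow e (f z)}) (δ : Q) :
    IsOpen {z | totallyBelow δ (f z)} := by
  refine isOpen_iff_eventually.mpr fun y hy => ?_
  obtain ⟨e, he, hδe⟩ := hy _ (hf y)
  exact he.mono fun z hz => totallyBelow_of_le_of_totallyBelow hδe hz

theorem isOpen_setOf_wayBelow
    (hf : ∀ y, f y ≤ sSup {e | ∀ᶠ z in 𝓝 y, wayBelow e (f z)}) (δ : Q) :
    IsOpen {z | wayBelow δ (f z)} := by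
  refine isOpen_iff_eventually.mpr fun y hy => ?_
  have hdir : DirectedOn (· ≤ ·) {e | ∀ᶠ z in 𝓝 y, wayBelow e (f z)} :=
    fun a ha b hb =>
      ⟨a ⊔ b, (ha.and hb).mono fun _ h => h.1.sup h.2, le_sup_left, le_sup_right⟩
  obtain ⟨e, he, hδe⟩ := hy _ ⟨⊥, Eventually.of_forall fun _ => wayBelow_bot⟩ hdir (hf y)
  exact he.mono fun z hz => wayBelow_of_le_of_wayBelow hδe hz

end CompleteLattice

section One

variable {Q : Type*} [One Q] [CompleteLattice Q]
variable {X : Type*} [TopologicalSpace X] {d : X → X → Q}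

theorem eventually_le_of_isOpen_totallyBelow_balls (hrefl : ∀ x : X, (1 : Q) ≤ d x x)
    (hopen : ∀ y ε, totallyBelow ε (1 : Q) → IsOpen {z | totallyBelow ε (d y z)})
    (y : X) (ε : Q) (hε : totallyBelow ε 1) : ∀ᶠ z in 𝓝 y, ε ≤ d y z :=
  mem_of_superset ((hopen y ε hε).mem_nhds (totallyBelow_of_totallyBelow_of_le hε (hrefl y)))
    fun _ hz => totallyBelow.le hz

theorem eventually_le_of_isOpen_wayBelow_balls (hrefl : ∀ x : X, (1 : Q) ≤ d x x)
    (hopen : ∀ y ε, wayBelow ε (1 : Q) → IsOpen {z | wayBelow ε (d y z)})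
    (y : X) (ε : Q) (hε : totallyBelow ε 1) : ∀ᶠ z in 𝓝 y, ε ≤ d y z :=
  mem_of_superset ((hopen y ε hε.wayBelow).mem_nhds
      (totallyBelow_of_totallyBelow_of_le hε (hrefl y)).wayBelow)
    fun _ hz => wayBelow.le hz

end One

section Quantale

variable {Q : Type*} [Monoid Q] [CompleteLattice Q] [IsQuantale Q]

theorem le_sSup_totallyBelow_mul (hpc : ∀ y : Q, y = sSup {x : Q | totallyBelow x y}) (b : Q) :
    b ≤ sSup {e : Q | ∃ ε, totallyBelow ε 1 ∧ totallyBelow e (b * ε)} :=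
  calc b = b * sSup {ε : Q | totallyBelow ε 1} := by rw [← hpc 1, mul_one]
    _ = ⨆ ε ∈ {ε : Q | totallyBelow ε 1}, b * ε := mul_sSup_distrib
    _ ≤ sSup {e : Q | ∃ ε, totallyBelow ε 1 ∧ totallyBelow e (b * ε)} :=
      iSup₂_le fun ε hε => (hpc (b * ε)).le.trans (sSup_le_sSup fun _ he => ⟨ε, hε, he⟩)

variable {X : Type*} [TopologicalSpace X] {d : X → X → Q}

theorem le_sSup_eventually_totallyBelow (hpc : ∀ y : Q, y = sSup {x : Q | totallyBelow x y})
    (htri : ∀ x y z : X, d x y * d y z ≤ d x z)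
    (hnhds : ∀ y ε, totallyBelow ε (1 : Q) → ∀ᶠ z in 𝓝 y, ε ≤ d y z) (x y : X) :
    d x y ≤ sSup {e | ∀ᶠ z in 𝓝 y, totallyBelow e (d x z)} := by
  refine (le_sSup_totallyBelow_mul hpc (d x y)).trans (sSup_le_sSup ?_)
  rintro e ⟨ε, hε, he⟩
  exact (hnhds y ε hε).mono fun z hz =>
    totallyBelow_of_totallyBelow_of_le he ((mul_le_mul_right hz _).trans (htri x y z))

end Quantale

theorem totallyBelow_balls_generate_same_topology {Q : Type*} [Monoid Q]
    [CompleteLattice Q] [IsQuantale Q]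
    (hpc : ∀ y : Q, y = sSup {x : Q | totallyBelow x y})
    {X : Type*} (d : X → X → Q)
    (hrefl : ∀ x : X, (1 : Q) ≤ d x x)
    (htri : ∀ x y z : X, d x y * d y z ≤ d x z) :
    TopologicalSpace.generateFrom
        {B : Set X | ∃ x δ, totallyBelow δ (1 : Q) ∧ B = {y : X | totallyBelow δ (d x y)}} =
      TopologicalSpace.generateFrom
        {B : Set X | ∃ x δ, wayBelow δ (1 : Q) ∧ B = {y : X | wayBelow δ (d x y)}} := by
  set ST := {B : Set X | ∃ x δ, totallyBelow δ (1 : Q) ∧ B = {y : X | totallyBelow δ (d x y)}}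
  set SW := {B : Set X | ∃ x δ, wayBelow δ (1 : Q) ∧ B = {y : X | wayBelow δ (d x y)}}
  apply le_antisymm
  · let := TopologicalSpace.generateFrom ST
    have hnhds := eventually_le_of_isOpen_totallyBelow_balls hrefl
      fun y ε hε => TopologicalSpace.isOpen_generateFrom_of_mem (g := ST) ⟨y, ε, hε, rfl⟩
    refine le_generateFrom ?_
    rintro _ ⟨x, δ, -, rfl⟩
    refine isOpen_setOf_wayBelow (fun y => ?_) δ
    exact (le_sSup_eventually_totallyBelow hpc htri hnhds x y).trans
      (sSup_le_sSup fun _ he => he.mono fun _ h => h.wayBelow)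
  · let := TopologicalSpace.generateFrom SW
    have hnhds := eventually_le_of_isOpen_wayBelow_balls hrefl
      fun y ε hε => TopologicalSpace.isOpen_generateFrom_of_mem (g := SW) ⟨y, ε, hε, rfl⟩
    refine le_generateFrom ?_
    rintro _ ⟨x, δ, -, rfl⟩
    exact isOpen_setOf_totallyBelow (le_sSup_eventually_totallyBelow hpc htri hnhds x) δ
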